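/- Let 1 ≤ q ≤ 2, let t ∈ ℝⁿ satisfy 1/2 ≤ t_i ≤ 1 for all i ∈ [n], let A ∈ ℝ^{n×d} have full column rank, and let y = Ax for some x ∈ ℝ^d. Let τ_i = a_iᵀ(AᵀA)⁻¹a_i be the leverage scores of A, let h ≥ 1 and p_i = h·√τ_i. Then max_{i∈[n]} (1/p_i)·γ_q(t_i, y_i) ≤ (16/h)·Σ_{i∈[n]} γ_q(t_i, y_i). -/

import Mathlib

open Matrix Finset

/-- The smoothed `q`-norm function `γ_q(t,x)`. -/
noncomputable def gammaFn (q t x : ℝ) : ℝ :=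
  if |x| ≤ t then (q / 2) * t ^ (q - 2) * x ^ 2
  else |x| ^ q + (q / 2 - 1) * t ^ q

/-- The leverage score `τ_i(A) = a_iᵀ(AᵀA)⁻¹a_i` of the `i`-th row of `A`. -/
noncomputable def lev {n d : ℕ} (A : Matrix (Fin n) (Fin d) ℝ) (i : Fin n) : ℝ :=
  A i ⬝ᵥ ((Aᵀ * A)⁻¹.mulVec (A i))

/-!
For `1/2 ≤ t ≤ 1`, `γ_q(t, y)` is comparable to `m(y) = min(y², |y|^q)`: `m ≤ 2γ` and `γ ≤ 4m`.
Cauchy–Schwarz against the `i`-th row of the hat matrix gives `y_i² ≤ τ_i ‖y‖²` with `τ_i ≤ 1`.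
Put `T = ∑ m(y_k)`. If `T ≤ 1`, every `|y_k| ≤ 1`, so `‖y‖² ≤ T` and `m(y_i) ≤ y_i² ≤ τ_i T`.
If `T ≥ 1`, then `‖y‖² ≤ T^{2/q}` (the `ℓ^{2/q}` norm of `(m(y_k))_k` is at most its `ℓ¹` norm),
so `m(y_i) ≤ (y_i²)^{q/2} ≤ τ_i^{q/2} T`. Either way `m(y_i) ≤ √τ_i T`, hence
`γ(y_i) ≤ 8 √τ_i ∑ γ(y_k)`.
-/

noncomputable def minSqRpow (q y : ℝ) : ℝ := min (y ^ 2) (|y| ^ q)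

section MinSqRpow

variable {q : ℝ}

lemma minSqRpow_nonneg (q y : ℝ) : 0 ≤ minSqRpow q y :=
  le_min (sq_nonneg y) (Real.rpow_nonneg (abs_nonneg y) q)

lemma minSqRpow_le_sq (q y : ℝ) : minSqRpow q y ≤ y ^ 2 := min_le_left _ _

lemma minSqRpow_le_abs_rpow (q y : ℝ) : minSqRpow q y ≤ |y| ^ q := min_le_right _ _

lemma sq_le_abs_rpow_of_abs_le_one (hq2 : q ≤ 2) {y : ℝ} (hy : |y| ≤ 1) : y ^ 2 ≤ |y| ^ q := by
  rcases (abs_nonneg y).eq_or_lt with hy0 | hy0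
  · simp [abs_eq_zero.mp hy0.symm, Real.rpow_nonneg]
  · simpa [Real.rpow_two] using Real.rpow_le_rpow_of_exponent_ge hy0 hy hq2

lemma abs_rpow_le_sq_of_one_le_abs (hq2 : q ≤ 2) {y : ℝ} (hy : 1 ≤ |y|) : |y| ^ q ≤ y ^ 2 := by
  simpa [Real.rpow_two] using Real.rpow_le_rpow_of_exponent_le hy hq2

lemma abs_le_one_of_minSqRpow_le_one (hq : 0 < q) {y : ℝ} (h : minSqRpow q y ≤ 1) :
    |y| ≤ 1 := by
  by_contra! hy
  have hsq : 1 < y ^ 2 := by nlinarith [sq_abs y]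
  exact (lt_min hsq (Real.one_lt_rpow hy hq)).not_ge h

lemma sq_le_minSqRpow_mul_rpow (hq1 : 1 ≤ q) (hq2 : q ≤ 2) {y T : ℝ} (hT : 1 ≤ T)
    (hyT : minSqRpow q y ≤ T) : y ^ 2 ≤ minSqRpow q y * T ^ (2 / q - 1) := by
  have hq : 0 < q := by linarith
  have he : 0 ≤ 2 / q - 1 := by rw [sub_nonneg, one_le_div hq]; exact hq2
  rcases le_total |y| 1 with hy | hy
  · rw [minSqRpow, min_eq_left (sq_le_abs_rpow_of_abs_le_one hq2 hy)]
    exact le_mul_of_one_le_right (sq_nonneg y) (Real.one_le_rpow hT he)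
  · have hm : minSqRpow q y = |y| ^ q := min_eq_right (abs_rpow_le_sq_of_one_le_abs hq2 hy)
    have hm1 : 1 ≤ minSqRpow q y := hm ▸ Real.one_le_rpow hy hq.le
    calc y ^ 2 = minSqRpow q y ^ (2 / q) := by
          rw [hm, ← Real.rpow_mul (abs_nonneg y), mul_div_cancel₀ _ hq.ne', Real.rpow_two,
            sq_abs]
      _ = minSqRpow q y * minSqRpow q y ^ (2 / q - 1) := by
          rw [Real.rpow_sub (by linarith), Real.rpow_one, mul_div_cancel₀ _ (by linarith)]
      _ ≤ minSqRpow q y * T ^ (2 / q - 1) := by gcongr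

variable {ι : Type*} [Fintype ι]

lemma sum_sq_le_sum_minSqRpow_of_le_one (hq1 : 1 ≤ q) (hq2 : q ≤ 2) (y : ι → ℝ)
    (hT : ∑ k, minSqRpow q (y k) ≤ 1) : ∑ k, y k ^ 2 ≤ ∑ k, minSqRpow q (y k) := by
  refine sum_le_sum fun k _ => ?_
  have hk : minSqRpow q (y k) ≤ 1 :=
    (single_le_sum (fun j _ => minSqRpow_nonneg q (y j)) (mem_univ k)).trans hT
  have hyk := abs_le_one_of_minSqRpow_le_one (by linarith) hk
  exact le_min le_rfl (sq_le_abs_rpow_of_abs_le_one hq2 hyk)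

lemma sum_sq_le_rpow_sum_minSqRpow (hq1 : 1 ≤ q) (hq2 : q ≤ 2) (y : ι → ℝ)
    (hT : 1 ≤ ∑ k, minSqRpow q (y k)) :
    ∑ k, y k ^ 2 ≤ (∑ k, minSqRpow q (y k)) ^ (2 / q) := by
  set T := ∑ k, minSqRpow q (y k)
  calc ∑ k, y k ^ 2 ≤ ∑ k, minSqRpow q (y k) * T ^ (2 / q - 1) :=
        sum_le_sum fun k _ => sq_le_minSqRpow_mul_rpow hq1 hq2 hT
          (single_le_sum (fun j _ => minSqRpow_nonneg q (y j)) (mem_univ k))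
    _ = T ^ (2 / q) := by
        rw [← sum_mul, Real.rpow_sub (by linarith), Real.rpow_one,
          mul_div_cancel₀ _ (by linarith)]

lemma minSqRpow_le_sqrt_mul_sum (hq1 : 1 ≤ q) (hq2 : q ≤ 2) (y : ι → ℝ) (i : ι) {τ : ℝ}
    (hτ0 : 0 ≤ τ) (hτ1 : τ ≤ 1) (hy : y i ^ 2 ≤ τ * ∑ k, y k ^ 2) :
    minSqRpow q (y i) ≤ √τ * ∑ k, minSqRpow q (y k) := by
  have hq : 0 < q := by linarith
  set T := ∑ k, minSqRpow q (y k)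
  have hT0 : 0 ≤ T := sum_nonneg fun k _ => minSqRpow_nonneg q (y k)
  rcases le_total T 1 with hT | hT
  · calc minSqRpow q (y i) ≤ y i ^ 2 := minSqRpow_le_sq q (y i)
      _ ≤ τ * T := hy.trans (by gcongr; exact sum_sq_le_sum_minSqRpow_of_le_one hq1 hq2 y hT)
      _ ≤ √τ * T := by gcongr; exact Real.le_sqrt_of_sq_le (by nlinarith)
  · have hτq : τ ^ (q / 2) ≤ √τ := by
      rw [Real.sqrt_eq_rpow]
      exact Real.rpow_le_rpow_of_exponent_ge' hτ0 hτ1 (by norm_num) (by linarith)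
    calc minSqRpow q (y i) ≤ |y i| ^ q := minSqRpow_le_abs_rpow q (y i)
      _ = (y i ^ 2) ^ (q / 2) := by
          rw [← sq_abs, ← Real.rpow_two, ← Real.rpow_mul (abs_nonneg _),
            mul_div_cancel₀ _ two_ne_zero]
      _ ≤ (τ * T ^ (2 / q)) ^ (q / 2) := by
          gcongr
          exact hy.trans (by gcongr; exact sum_sq_le_rpow_sum_minSqRpow hq1 hq2 y hT)
      _ = τ ^ (q / 2) * T := by
          rw [Real.mul_rpow hτ0 (by positivity), ← Real.rpow_mul hT0,
            div_mul_div_cancel₀ hq.ne', div_self two_ne_zero, Real.rpow_one]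
      _ ≤ √τ * T := by gcongr

end MinSqRpow

section GammaFn

variable {q t : ℝ}

lemma minSqRpow_le_two_mul_gammaFn (hq1 : 1 ≤ q) (hq2 : q ≤ 2) (ht0 : 0 < t) (ht1 : t ≤ 1)
    (y : ℝ) : minSqRpow q y ≤ 2 * gammaFn q t y := by
  unfold gammaFn
  split_ifs with hy
  · have h1 : 1 ≤ t ^ (q - 2) :=
      Real.one_le_rpow_of_pos_of_le_one_of_nonpos ht0 ht1 (by linarith)
    have : y ^ 2 ≤ q * t ^ (q - 2) * y ^ 2 := le_mul_of_one_le_left (sq_nonneg y) (by nlinarith)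
    linarith [minSqRpow_le_sq q y]
  · have htq : t ^ q ≤ |y| ^ q := Real.rpow_le_rpow ht0.le (not_le.mp hy).le (by linarith)
    nlinarith [minSqRpow_le_abs_rpow q y, Real.rpow_nonneg ht0.le q]

lemma gammaFn_nonneg (hq1 : 1 ≤ q) (hq2 : q ≤ 2) (ht0 : 0 < t) (ht1 : t ≤ 1) (y : ℝ) :
    0 ≤ gammaFn q t y := by
  linarith [minSqRpow_le_two_mul_gammaFn hq1 hq2 ht0 ht1 y, minSqRpow_nonneg q y]

lemma gammaFn_le_four_mul_minSqRpow (hq1 : 1 ≤ q) (hq2 : q ≤ 2) (ht1 : 1 / 2 ≤ t) (y : ℝ) :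
    gammaFn q t y ≤ 4 * minSqRpow q y := by
  have ht0 : 0 < t := by linarith
  rw [minSqRpow, mul_min_of_nonneg _ _ zero_le_four, le_min_iff]
  unfold gammaFn
  split_ifs with hy
  · have htq : t ^ (q - 2) ≤ 2 :=
      calc t ^ (q - 2) ≤ (1 / 2) ^ (q - 2) :=
            Real.rpow_le_rpow_of_nonpos (by norm_num) ht1 (by linarith)
        _ = 2 ^ (2 - q) := by
            rw [one_div, Real.inv_rpow zero_le_two, ← Real.rpow_neg zero_le_two, neg_sub]
        _ ≤ 2 ^ (1 : ℝ) := Real.rpow_le_rpow_of_exponent_le one_le_two (by linarith)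
        _ = 2 := Real.rpow_one 2
    have hc : q / 2 * t ^ (q - 2) ≤ 2 := by nlinarith [Real.rpow_nonneg ht0.le (q - 2)]
    refine ⟨by nlinarith [mul_le_mul_of_nonneg_right hc (sq_nonneg y)], ?_⟩
    rcases (abs_nonneg y).eq_or_lt with hy0 | hy0
    · simp [abs_eq_zero.mp hy0.symm, Real.rpow_nonneg]
    · have h1 : t ^ (q - 2) * y ^ 2 ≤ |y| ^ q :=
        calc t ^ (q - 2) * y ^ 2 ≤ |y| ^ (q - 2) * |y| ^ (2 : ℝ) := by
              rw [Real.rpow_two, sq_abs]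
              exact mul_le_mul_of_nonneg_right
                (Real.rpow_le_rpow_of_nonpos hy0 hy (by linarith)) (sq_nonneg _)
          _ = |y| ^ q := by rw [← Real.rpow_add hy0, sub_add_cancel]
      have hq : 0 ≤ q / 2 := by linarith
      nlinarith [mul_le_mul_of_nonneg_left h1 hq, Real.rpow_nonneg (abs_nonneg y) q]
  · have hle : |y| ^ q + (q / 2 - 1) * t ^ q ≤ |y| ^ q := by
      nlinarith [Real.rpow_nonneg ht0.le q]
    have hsq : |y| ^ q ≤ 4 * y ^ 2 := by
      rcases le_total 1 |y| with h1 | h1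
      · nlinarith [abs_rpow_le_sq_of_one_le_abs hq2 h1, sq_nonneg y]
      · nlinarith [Real.rpow_le_one (abs_nonneg y) h1 (by linarith : 0 ≤ q), sq_abs y]
    exact ⟨hle.trans hsq, by linarith [Real.rpow_nonneg (abs_nonneg y) q]⟩

lemma gammaFn_le_sqrt_mul_sum {ι : Type*} [Fintype ι] (hq1 : 1 ≤ q) (hq2 : q ≤ 2)
    (t : ι → ℝ) (ht1 : ∀ k, 1 / 2 ≤ t k) (ht2 : ∀ k, t k ≤ 1) (y : ι → ℝ) (i : ι) {τ : ℝ}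
    (hτ0 : 0 ≤ τ) (hτ1 : τ ≤ 1) (hy : y i ^ 2 ≤ τ * ∑ k, y k ^ 2) :
    gammaFn q (t i) (y i) ≤ 8 * √τ * ∑ k, gammaFn q (t k) (y k) := by
  calc gammaFn q (t i) (y i) ≤ 4 * minSqRpow q (y i) :=
        gammaFn_le_four_mul_minSqRpow hq1 hq2 (ht1 i) _
    _ ≤ 4 * (√τ * ∑ k, minSqRpow q (y k)) := by
        gcongr; exact minSqRpow_le_sqrt_mul_sum hq1 hq2 y i hτ0 hτ1 hy
    _ ≤ 4 * (√τ * ∑ k, 2 * gammaFn q (t k) (y k)) := by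
        gcongr with k; exact minSqRpow_le_two_mul_gammaFn hq1 hq2 (by linarith [ht1 k]) (ht2 k) _
    _ = 8 * √τ * ∑ k, gammaFn q (t k) (y k) := by
        rw [← mul_sum]; ring

end GammaFn

section Leverage

lemma isUnit_det_transpose_mul_self {m n : Type*} [Fintype m] [Fintype n] [DecidableEq n]
    {A : Matrix m n ℝ} (hA : A.rank = Fintype.card n) : IsUnit (Aᵀ * A).det := by
  rw [← isUnit_iff_isUnit_det, ← mulVec_surjective_iff_isUnit, ← coe_mulVecLin,
    ← LinearMap.range_eq_top]
  apply Submodule.eq_top_of_finrank_eq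
  rw [← Matrix.rank, rank_transpose_mul_self, hA, Module.finrank_fintype_fun_eq_card]

variable {n d : ℕ} {A : Matrix (Fin n) (Fin d) ℝ}

/-- The `i`-th row of the hat matrix `A (AᵀA)⁻¹ Aᵀ`. -/
noncomputable def hatRow (A : Matrix (Fin n) (Fin d) ℝ) (i : Fin n) : Fin n → ℝ :=
  A *ᵥ ((Aᵀ * A)⁻¹ *ᵥ A i)

lemma hatRow_apply_self (i : Fin n) : hatRow A i i = lev A i := rfl

lemma hatRow_dotProduct_mulVec (hA : IsUnit (Aᵀ * A).det) (i : Fin n) (v : Fin d → ℝ) :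
    hatRow A i ⬝ᵥ (A *ᵥ v) = A i ⬝ᵥ v := by
  rw [hatRow, dotProduct_mulVec, ← mulVec_transpose, mulVec_mulVec, mulVec_mulVec,
    mul_nonsing_inv _ hA, one_mulVec]

lemma sum_sq_hatRow (hA : IsUnit (Aᵀ * A).det) (i : Fin n) :
    ∑ k, hatRow A i k ^ 2 = lev A i := by
  simp only [sq]
  exact hatRow_dotProduct_mulVec hA i _

lemma lev_nonneg (hA : IsUnit (Aᵀ * A).det) (i : Fin n) : 0 ≤ lev A i :=
  sum_sq_hatRow hA i ▸ sum_nonneg fun _ _ => sq_nonneg _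

lemma lev_le_one (hA : IsUnit (Aᵀ * A).det) (i : Fin n) : lev A i ≤ 1 := by
  have h : lev A i ^ 2 ≤ lev A i :=
    calc lev A i ^ 2 = hatRow A i i ^ 2 := by rw [hatRow_apply_self]
      _ ≤ ∑ k, hatRow A i k ^ 2 := single_le_sum (fun _ _ => sq_nonneg _) (mem_univ i)
      _ = lev A i := sum_sq_hatRow hA i
  nlinarith [lev_nonneg hA i]

lemma sq_mulVec_apply_le_lev_mul_sum (hA : IsUnit (Aᵀ * A).det) (x : Fin d → ℝ) (i : Fin n) :
    (A *ᵥ x) i ^ 2 ≤ lev A i * ∑ k, (A *ᵥ x) k ^ 2 :=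
  calc (A *ᵥ x) i ^ 2 = (∑ k, hatRow A i k * (A *ᵥ x) k) ^ 2 := by
        rw [← dotProduct, hatRow_dotProduct_mulVec hA]; rfl
    _ ≤ (∑ k, hatRow A i k ^ 2) * ∑ k, (A *ᵥ x) k ^ 2 := sum_mul_sq_le_sq_mul_sq _ _ _
    _ = lev A i * ∑ k, (A *ᵥ x) k ^ 2 := by rw [sum_sq_hatRow hA]

end Leverage

/-- with `1 ≤ q ≤ 2`, `1/2 ≤ t_i ≤ 1`, `A` of full column rank, `y = Ax`,
`h ≥ 1` and `p_i = h√τ_i`: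
`max_i (1/p_i)γ_q(t_i, y_i) ≤ (16/h)·Σ_i γ_q(t_i, y_i)`
(stated as the bound holding for every index `i`). -/
theorem stmt3 (n d : ℕ) (q : ℝ) (hq1 : 1 ≤ q) (hq2 : q ≤ 2)
    (t : Fin n → ℝ) (ht1 : ∀ i, (1 : ℝ) / 2 ≤ t i) (ht2 : ∀ i, t i ≤ 1)
    (A : Matrix (Fin n) (Fin d) ℝ) (hA : A.rank = d)
    (x : Fin d → ℝ) (h : ℝ) (hh : 1 ≤ h) (i : Fin n) :
    (1 / (h * Real.sqrt (lev A i))) * gammaFn q (t i) ((A.mulVec x) i)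
      ≤ (16 / h) * ∑ k, gammaFn q (t k) ((A.mulVec x) k) := by
  have hdet := isUnit_det_transpose_mul_self (hA.trans (Fintype.card_fin d).symm)
  have hh0 : 0 < h := by linarith
  set S := ∑ k, gammaFn q (t k) ((A.mulVec x) k)
  have hS : 0 ≤ S := sum_nonneg fun k _ => gammaFn_nonneg hq1 hq2 (by linarith [ht1 k]) (ht2 k) _
  have hγ : gammaFn q (t i) ((A.mulVec x) i) ≤ 8 * √(lev A i) * S :=
    gammaFn_le_sqrt_mul_sum hq1 hq2 t ht1 ht2 _ i (lev_nonneg hdet i) (lev_le_one hdet i)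
      (sq_mulVec_apply_le_lev_mul_sum hdet x i)
  rcases (Real.sqrt_nonneg (lev A i)).eq_or_lt with hτ | hτ
  · -- here the left side is `1 / 0 * _ = 0`
    rw [← hτ, mul_zero, div_zero, zero_mul]
    positivity
  · rw [one_div_mul_eq_div, div_le_iff₀ (by positivity)]
    calc gammaFn q (t i) ((A.mulVec x) i) ≤ 8 * √(lev A i) * S := hγ
      _ ≤ 16 / h * S * (h * √(lev A i)) := by
          rw [show 16 / h * S * (h * √(lev A i)) = 16 * √(lev A i) * S by field_simp]
          nlinarith
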